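/- Assume ∫_τ^∞ p(u) du < ∞ and that ∫_ε^∞ du/φ(u) < ∞ for some ε > 0. Let x be a solution of (E) with x(t) > 0 and x′(t) ≥ 0 for all t ≥ τ. Then Σ_{j=0}^∞ ∫_{t_j}^{ζ_j} (1/r(s))·(∫_{t_{j+1}}^∞ p(u) du) ds ≤ ∫_{x(t_0)}^∞ dz/φ(z) < ∞; in particular the series on the left converges. -/

import Mathlib

/-!
Write `G = r x'` and `P_j = ∫_{t_{j+1}}^∞ p`. Since `x` is positive and nondecreasing, on every
`(t_k, t_{k+1})` with `k > j` and every `s ∈ [t_j, ζ_j]` the equation gives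
`-G' = f(·, x(ζ_k)) ≥ p φ(x(ζ_k)) ≥ p φ(x(s)) ≥ 0`. Hence `G` is nonincreasing and nonnegative, and
telescoping over the intervals `[t_k, t_{k+1}]`, `k > j`, yields `φ(x(s)) P_j ≤ G(t_{j+1}) ≤ G(s)`,
i.e. `P_j / r ≤ x' / φ(x)` on `[t_j, ζ_j]`. Integrating and substituting `z = x(s)` bounds the
`j`-th term by `∫_{x(t_j)}^{x(ζ_j)} dz/φ(z)`; these intervals are disjoint subintervals of
`(x(t_0), ∞)`, on which `1/φ` is integrable since it is bounded by `1/φ(x(t_0))` below `ε`.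
-/

open MeasureTheory Set Filter

theorem antitoneOn_Ici_of_antitoneOn_Icc_succ {α β : Type*} [LinearOrder α] [Preorder β]
    {t : ℕ → α} {g : α → β} (ht : Monotone t) (ht_top : Tendsto t atTop atTop)
    (hg : ∀ k, AntitoneOn g (Icc (t k) (t (k + 1)))) : AntitoneOn g (Ici (t 0)) := by
  have hIcc : ∀ n, AntitoneOn g (Icc (t 0) (t n)) := by
    intro n
    induction n with
    | zero => simp
    | succ n ih =>
      rw [← Icc_union_Icc_eq_Icc (ht n.zero_le) (ht n.le_succ)]
      exact ih.union_right (hg n) (isGreatest_Icc (ht n.zero_le)) (isLeast_Icc (ht n.le_succ))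
  intro a ha b hb hab
  obtain ⟨n, hn⟩ := (ht_top.eventually_ge_atTop b).exists
  exact hIcc n ⟨ha, hab.trans hn⟩ ⟨hb, hn⟩ hab

theorem antitoneOn_Ici_of_hasDerivAt_neg {t : ℕ → ℝ} {G : ℝ → ℝ} {h : ℕ → ℝ → ℝ}
    (ht : Monotone t) (ht_top : Tendsto t atTop atTop) (hG : ContinuousOn G (Ici (t 0)))
    (hG' : ∀ k, ∀ s ∈ Ioo (t k) (t (k + 1)), HasDerivAt G (-h k s) s)
    (hh : ∀ k, ∀ s ∈ Ioo (t k) (t (k + 1)), 0 ≤ h k s) : AntitoneOn G (Ici (t 0)) :=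
  antitoneOn_Ici_of_antitoneOn_Icc_succ ht ht_top fun k =>
    antitoneOn_of_hasDerivWithinAt_nonpos (convex_Icc _ _)
      (hG.mono fun s hs => (ht k.zero_le).trans hs.1)
      (fun s hs => (hG' k s (by simpa using hs)).hasDerivWithinAt)
      (fun s hs => neg_nonpos.2 (hh k s (by simpa using hs)))

theorem intervalIntegrable_of_integrableOn_Ioi {E : Type*} [NormedAddCommGroup E]
    {μ : Measure ℝ} {f : ℝ → E} {a b c : ℝ} (hf : IntegrableOn f (Ioi a) μ) (hb : a ≤ b)
    (hc : a ≤ c) : IntervalIntegrable f μ b c :=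
  intervalIntegrable_iff.2 <| hf.mono_set fun _ hu => (le_min hb hc).trans_lt hu.1

theorem mul_integral_le_sub_of_hasDerivAt_neg {a b c : ℝ} {p h G : ℝ → ℝ} (hab : a ≤ b)
    (hG : ContinuousOn G (Icc a b)) (hG' : ∀ s ∈ Ioo a b, HasDerivAt G (-h s) s)
    (hp : IntervalIntegrable p volume a b) (hh : ∀ s ∈ Ioo a b, 0 ≤ h s)
    (hph : ∀ s ∈ Ioo a b, c * p s ≤ h s) :
    c * ∫ s in a..b, p s ≤ G a - G b := by
  have hh_int : IntervalIntegrable h volume a b :=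
    (intervalIntegrable_iff_integrableOn_Ioc_of_le hab).2 <|
      intervalIntegral.integrableOn_deriv_of_nonneg hG.neg
        (fun s hs => by simpa using (hG' s hs).neg) hh
  have hFTC := intervalIntegral.integral_eq_sub_of_hasDerivAt_of_le hab hG hG' hh_int.neg
  rw [intervalIntegral.integral_neg] at hFTC
  calc c * ∫ s in a..b, p s = ∫ s in a..b, c * p s :=
        (intervalIntegral.integral_const_mul _ _).symm
    _ ≤ ∫ s in a..b, h s :=
        intervalIntegral.integral_mono_on_of_le_Ioo hab (hp.const_mul c) hh_int hph
    _ = G a - G b := by linarith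

theorem mul_integral_Ioi_le_of_hasDerivAt_neg {t : ℕ → ℝ} {n : ℕ} {c : ℝ} {p G : ℝ → ℝ}
    {h : ℕ → ℝ → ℝ} (ht : Monotone t) (ht_top : Tendsto t atTop atTop)
    (hG : ContinuousOn G (Ici (t n))) (hG_nonneg : ∀ k ≥ n, 0 ≤ G (t k))
    (hG' : ∀ k ≥ n, ∀ s ∈ Ioo (t k) (t (k + 1)), HasDerivAt G (-h k s) s)
    (hp : IntegrableOn p (Ioi (t n))) (hh : ∀ k ≥ n, ∀ s ∈ Ioo (t k) (t (k + 1)), 0 ≤ h k s)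
    (hph : ∀ k ≥ n, ∀ s ∈ Ioo (t k) (t (k + 1)), c * p s ≤ h k s) :
    c * ∫ u in Ioi (t n), p u ≤ G (t n) := by
  have hp_int : ∀ k l, n ≤ k → n ≤ l → IntervalIntegrable p volume (t k) (t l) :=
    fun k l hk hl => intervalIntegrable_of_integrableOn_Ioi hp (ht hk) (ht hl)
  have hpartial : ∀ N, c * ∫ u in t n..t (n + N), p u ≤ G (t n) - G (t (n + N)) := by
    intro N
    induction N with
    | zero => simp
    | succ N ih =>
      have hk : n ≤ n + N := Nat.le_add_right n N
      have hstep := mul_integral_le_sub_of_hasDerivAt_neg (ht (n + N).le_succ)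
        (hG.mono fun s hs => (ht hk).trans hs.1) (hG' _ hk)
        (hp_int _ _ hk (hk.trans (n + N).le_succ)) (hh _ hk) (hph _ hk)
      rw [← add_assoc, ← intervalIntegral.integral_add_adjacent_intervals
        (hp_int _ _ le_rfl hk) (hp_int _ _ hk (hk.trans (n + N).le_succ)), mul_add]
      linarith
  have ht_shift : Tendsto (fun N => t (n + N)) atTop atTop :=
    ht_top.comp ((tendsto_add_atTop_nat n).congr fun N => add_comm N n)
  refine le_of_tendsto' ((intervalIntegral_tendsto_integral_Ioi _ hp ht_shift).const_mul c)
    fun N => ?_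
  linarith [hpartial N, hG_nonneg _ (Nat.le_add_right n N)]

theorem integrableOn_Ioi_one_div_of_monotone {φ : ℝ → ℝ} {b ε : ℝ} (hφ : Monotone φ)
    (hb : 0 < φ b) (hε : ∫⁻ u in Ioi ε, ENNReal.ofReal (1 / φ u) < ⊤) :
    IntegrableOn (fun u => 1 / φ u) (Ioi b) := by
  have hpos : ∀ u, b ≤ u → 0 < φ u := fun u hu => hb.trans_le (hφ hu)
  have hanti : AntitoneOn (fun u => 1 / φ u) (Ici b) := fun u hu _ _ huv =>
    one_div_le_one_div_of_le (hpos u hu) (hφ huv)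
  have hnear : IntegrableOn (fun u => 1 / φ u) (Icc b (max b ε)) :=
    (hanti.mono Icc_subset_Ici_self).integrableOn_isCompact isCompact_Icc
  have hfar : IntegrableOn (fun u => 1 / φ u) (Ioi (max b ε)) := by
    refine (lintegral_ofReal_ne_top_iff_integrable
      (measurable_const.div hφ.measurable).aestronglyMeasurable ?_).1 ?_
    · exact ae_restrict_of_forall_mem measurableSet_Ioi fun u hu =>
        (one_div_pos.2 (hpos u ((le_max_left b ε).trans hu.le))).le
    · exact ((lintegral_mono_set (Ioi_subset_Ioi (le_max_right b ε))).trans_lt hε).ne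
  exact (hnear.union hfar).mono_set fun u hu =>
    (le_or_gt u (max b ε)).imp (fun h => ⟨hu.le, h⟩) id

theorem integral_one_div_mul_le_integral_one_div_comp {a b c : ℝ} {r x x' φ : ℝ → ℝ}
    (hab : a ≤ b) (hr : ContinuousOn r (Icc a b)) (hr_pos : ∀ s ∈ Icc a b, 0 < r s)
    (hx : ∀ s ∈ Icc a b, HasDerivAt x (x' s) s) (hx' : ∀ s ∈ Icc a b, 0 ≤ x' s)
    (hφ : Monotone φ) (hφx : 0 < φ (x a))
    (hbound : ∀ s ∈ Icc a b, φ (x s) * c ≤ r s * x' s) :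
    ∫ s in a..b, 1 / r s * c ≤ ∫ z in x a..x b, 1 / φ z := by
  have hx_cont : ContinuousOn x (Icc a b) := fun s hs =>
    (hx s hs).continuousAt.continuousWithinAt
  have hx_mono : MonotoneOn x (Icc a b) :=
    monotoneOn_of_hasDerivWithinAt_nonneg (convex_Icc a b) hx_cont
      (fun s hs => (hx s (interior_subset hs)).hasDerivWithinAt)
      (fun s hs => hx' s (interior_subset hs))
  have hφx_pos : ∀ s ∈ Icc a b, 0 < φ (x s) := fun s hs =>
    hφx.trans_le (hφ (hx_mono (left_mem_Icc.2 hab) hs hs.1))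
  rw [← uIcc_of_le hab] at hx_cont
  have hderiv : ∀ s ∈ Ioo (min a b) (max a b), HasDerivAt x (x' s) s := fun s hs =>
    hx s (Ioo_subset_Icc_self (by simpa [hab] using hs))
  have hderiv_nonneg : ∀ s ∈ Ioo (min a b) (max a b), 0 ≤ x' s := fun s hs =>
    hx' s (Ioo_subset_Icc_self (by simpa [hab] using hs))
  have hanti : AntitoneOn (fun z => 1 / φ z) (uIcc (x a) (x b)) := by
    rw [uIcc_of_le (hx_mono (left_mem_Icc.2 hab) (right_mem_Icc.2 hab) hab)]
    exact fun u hu _ _ huv => one_div_le_one_div_of_le (hφx.trans_le (hφ hu.1)) (hφ huv)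
  rw [← intervalIntegral.integral_comp_mul_deriv_of_deriv_nonneg hx_cont hderiv hderiv_nonneg]
  refine intervalIntegral.integral_mono_on hab
    ((continuousOn_const.div hr fun s hs => (hr_pos s hs).ne').mul continuousOn_const
      |>.intervalIntegrable_of_Icc hab)
    ((intervalIntegral.integrable_comp_mul_deriv_iff_of_deriv_nonneg hx_cont hderiv
      hderiv_nonneg).2 hanti.intervalIntegrable) fun s hs => ?_
  rw [Function.comp_apply, one_div_mul_eq_div, one_div_mul_eq_div,
    div_le_div_iff₀ (hr_pos s hs) (hφx_pos s hs)]
  linarith [hbound s hs]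

theorem summable_and_tsum_le_integral_Ioi {a y w : ℕ → ℝ} {h : ℝ → ℝ} (ha : ∀ j, 0 ≤ a j)
    (hyw : ∀ j, y j ≤ w j) (hwy : ∀ j, w j ≤ y (j + 1))
    (hh : IntegrableOn h (Ioi (y 0))) (hh_nonneg : ∀ z ∈ Ioi (y 0), 0 ≤ h z)
    (hle : ∀ j, a j ≤ ∫ z in y j..w j, h z) :
    Summable a ∧ ∑' j, a j ≤ ∫ z in Ioi (y 0), h z := by
  have hy : Monotone y := monotone_nat_of_le_succ fun j => (hyw j).trans (hwy j)
  have hh_int : ∀ m n, IntervalIntegrable h volume (y m) (y n) := fun m n =>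
    intervalIntegrable_of_integrableOn_Ioi hh (hy m.zero_le) (hy n.zero_le)
  have hpartial : ∀ N, ∑ j ∈ Finset.range N, a j ≤ ∫ z in Ioi (y 0), h z := fun N =>
    calc ∑ j ∈ Finset.range N, a j ≤ ∑ j ∈ Finset.range N, ∫ z in y j..y (j + 1), h z :=
          Finset.sum_le_sum fun j _ => (hle j).trans <|
            intervalIntegral.integral_mono_interval le_rfl (hyw j) (hwy j)
              (ae_restrict_of_forall_mem measurableSet_Ioc fun z hz =>
                hh_nonneg z ((hy j.zero_le).trans_lt hz.1))
              (hh_int j (j + 1))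
      _ = ∫ z in y 0..y N, h z :=
          intervalIntegral.sum_integral_adjacent_intervals fun k _ => hh_int k (k + 1)
      _ ≤ ∫ z in Ioi (y 0), h z := by
          rw [intervalIntegral.integral_of_le (hy N.zero_le)]
          exact setIntegral_mono_set hh (ae_restrict_of_forall_mem measurableSet_Ioi hh_nonneg)
            Ioc_subset_Ioi_self.eventuallyLE
  exact ⟨summable_of_sum_range_le ha hpartial, Real.tsum_le_of_sum_range_le ha hpartial⟩

theorem integral_tail_le_integral_one_div {t ζ : ℕ → ℝ} {r x x' p φ : ℝ → ℝ}
    {f : ℝ → ℝ → ℝ} (ht : Monotone t) (ht_top : Tendsto t atTop atTop)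
    (hζ : ∀ k, ζ k ∈ Icc (t k) (t (k + 1))) (hr : ContinuousOn r (Ici (t 0)))
    (hr_pos : ∀ s ∈ Ici (t 0), 0 < r s) (hx : ∀ s ∈ Ici (t 0), HasDerivAt x (x' s) s)
    (hx_mono : MonotoneOn x (Ici (t 0))) (hx' : ContinuousOn x' (Ici (t 0)))
    (hx'_nonneg : ∀ s ∈ Ici (t 0), 0 ≤ x' s)
    (hE : ∀ k, ∀ s ∈ Ioo (t k) (t (k + 1)), HasDerivAt (fun u => r u * x' u) (-f s (x (ζ k))) s)
    (hp : IntegrableOn p (Ioi (t 0))) (hp_nonneg : ∀ s ∈ Ici (t 0), 0 ≤ p s)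
    (hφ : Monotone φ) (hφx : ∀ s ∈ Ici (t 0), 0 < φ (x s))
    (hfp : ∀ k, ∀ s ∈ Ioo (t k) (t (k + 1)), p s * φ (x (ζ k)) ≤ f s (x (ζ k))) (j : ℕ) :
    ∫ s in t j..ζ j, 1 / r s * ∫ u in Ioi (t (j + 1)), p u ≤ ∫ z in x (t j)..x (ζ j), 1 / φ z := by
  have ht0 : ∀ k, t 0 ≤ t k := fun k => ht k.zero_le
  have hG : ContinuousOn (fun u => r u * x' u) (Ici (t 0)) := hr.mul hx'
  have hf_nonneg : ∀ k, ∀ s ∈ Ioo (t k) (t (k + 1)), 0 ≤ f s (x (ζ k)) := fun k s hs =>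
    (mul_nonneg (hp_nonneg s ((ht0 k).trans hs.1.le)) (hφx _ ((ht0 k).trans (hζ k).1)).le).trans
      (hfp k s hs)
  have hbound : ∀ s ∈ Icc (t j) (ζ j), φ (x s) * ∫ u in Ioi (t (j + 1)), p u ≤ r s * x' s := by
    intro s hs
    have hs0 : t 0 ≤ s := (ht0 j).trans hs.1
    have hph : ∀ k ≥ j + 1, ∀ u ∈ Ioo (t k) (t (k + 1)), φ (x s) * p u ≤ f u (x (ζ k)) := by
      intro k hk u hu
      have hsζ : s ≤ ζ k := hs.2.trans <| (hζ j).2.trans <| (ht hk).trans (hζ k).1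
      calc φ (x s) * p u ≤ φ (x (ζ k)) * p u :=
            mul_le_mul_of_nonneg_right (hφ (hx_mono hs0 ((ht0 k).trans (hζ k).1) hsζ))
              (hp_nonneg u ((ht0 k).trans hu.1.le))
        _ ≤ f u (x (ζ k)) := by linarith [hfp k u hu]
    calc φ (x s) * ∫ u in Ioi (t (j + 1)), p u ≤ r (t (j + 1)) * x' (t (j + 1)) :=
          mul_integral_Ioi_le_of_hasDerivAt_neg (h := fun k u => f u (x (ζ k))) ht ht_top
            (hG.mono (Ici_subset_Ici.2 (ht0 _)))
            (fun k _ => mul_nonneg (hr_pos _ (ht0 k)).le (hx'_nonneg _ (ht0 k)))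
            (fun k _ => hE k) (hp.mono_set (Ioi_subset_Ioi (ht0 _))) (fun k _ => hf_nonneg k) hph
      _ ≤ r s * x' s :=
          antitoneOn_Ici_of_hasDerivAt_neg ht ht_top hG hE hf_nonneg hs0 (ht0 _)
            (hs.2.trans (hζ j).2)
  have hIcc : Icc (t j) (ζ j) ⊆ Ici (t 0) := fun s hs => (ht0 j).trans hs.1
  exact integral_one_div_mul_le_integral_one_div_comp (hζ j).1 (hr.mono hIcc)
    (fun s hs => hr_pos s (hIcc hs)) (fun s hs => hx s (hIcc hs))
    (fun s hs => hx'_nonneg s (hIcc hs)) hφ (hφx _ (ht0 j)) hbound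

theorem stmt15_general
    (t ζ : ℕ → ℝ) (ht_mono : StrictMono t)
    (ht_top : Tendsto t atTop atTop)
    (hζ : ∀ k : ℕ, ζ k ∈ Icc (t k) (t (k+1)))
    (r : ℝ → ℝ) (hr_cont : ContinuousOn r (Ici (t 0)))
    (hr_pos : ∀ s ∈ Ici (t 0), 0 < r s)
    (f : ℝ → ℝ → ℝ)
    (x x' : ℝ → ℝ)
    (hx_deriv : ∀ s ∈ Ici (t 0), HasDerivAt x (x' s) s)
    (hx'_cont : ContinuousOn x' (Ici (t 0)))
    (hE : ∀ k : ℕ, ∀ s ∈ Ioo (t k) (t (k+1)),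
      HasDerivAt (fun u => r u * x' u) (-(f s (x (ζ k)))) s)
    (p : ℝ → ℝ) (hp_cont : ContinuousOn p (Ici (t 0)))
    (hp_nonneg : ∀ s ∈ Ici (t 0), 0 ≤ p s)
    (φ : ℝ → ℝ) (hφ_mono : Monotone φ)
    (hφ_sign : ∀ y : ℝ, y ≠ 0 → 0 < y * φ y)
    (hfp_pos : ∀ s ∈ Ici (t 0), ∀ y : ℝ, 0 < y → p s * φ y ≤ f s y)
    (hp_int : ∫⁻ u in Ioi (t 0), ENNReal.ofReal (p u) < ⊤)
    (ε : ℝ)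
    (hφ_int : ∫⁻ u in Ioi ε, ENNReal.ofReal (1 / φ u) < ⊤)
    (hx_pos : ∀ s ∈ Ici (t 0), 0 < x s)
    (hx'_nonneg : ∀ s ∈ Ici (t 0), 0 ≤ x' s) :
    Summable (fun j : ℕ => ∫ s in t j..ζ j, (1 / r s) * ∫ u in Ioi (t (j+1)), p u) ∧
    IntegrableOn (fun z => 1 / φ z) (Ioi (x (t 0))) ∧
    ∑' j : ℕ, (∫ s in t j..ζ j, (1 / r s) * ∫ u in Ioi (t (j+1)), p u) ≤
      ∫ z in Ioi (x (t 0)), 1 / φ z := by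
  have ht0 : ∀ k, t 0 ≤ t k := fun k => ht_mono.monotone k.zero_le
  have hζ0 : ∀ k, t 0 ≤ ζ k := fun k => (ht0 k).trans (hζ k).1
  have hφ_pos : ∀ y, 0 < y → 0 < φ y := fun y hy => pos_of_mul_pos_right (hφ_sign y hy.ne') hy.le
  have hx_mono : MonotoneOn x (Ici (t 0)) :=
    monotoneOn_of_hasDerivWithinAt_nonneg (convex_Ici _)
      (fun s hs => (hx_deriv s hs).continuousAt.continuousWithinAt)
      (fun s hs => (hx_deriv s (interior_subset hs)).hasDerivWithinAt)
      (fun s hs => hx'_nonneg s (interior_subset hs))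
  have hp : IntegrableOn p (Ioi (t 0)) :=
    (lintegral_ofReal_ne_top_iff_integrable
      ((hp_cont.mono Ioi_subset_Ici_self).aestronglyMeasurable measurableSet_Ioi)
      (ae_restrict_of_forall_mem measurableSet_Ioi fun u (hu : t 0 < u) => hp_nonneg u hu.le)).1
      hp_int.ne
  have hterm_nonneg : ∀ j, 0 ≤ ∫ s in t j..ζ j, 1 / r s * ∫ u in Ioi (t (j + 1)), p u :=
    fun j => intervalIntegral.integral_nonneg (hζ j).1 fun s hs =>
      mul_nonneg (one_div_nonneg.2 (hr_pos s ((ht0 j).trans hs.1)).le)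
        (setIntegral_nonneg measurableSet_Ioi fun u (hu : t (j + 1) < u) =>
          hp_nonneg u ((ht0 _).trans hu.le))
  have hint := integrableOn_Ioi_one_div_of_monotone hφ_mono
    (hφ_pos _ (hx_pos _ self_mem_Ici)) hφ_int
  obtain ⟨hsum, hle⟩ := summable_and_tsum_le_integral_Ioi hterm_nonneg
    (fun j => hx_mono (ht0 j) (hζ0 j) (hζ j).1) (fun j => hx_mono (hζ0 j) (ht0 (j + 1)) (hζ j).2)
    hint (fun z hz => (one_div_pos.2 (hφ_pos z ((hx_pos _ self_mem_Ici).trans hz))).le)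
    (integral_tail_le_integral_one_div ht_mono.monotone ht_top hζ hr_cont hr_pos hx_deriv hx_mono
      hx'_cont hx'_nonneg hE hp hp_nonneg hφ_mono (fun s hs => hφ_pos _ (hx_pos s hs))
      fun k s hs => hfp_pos s ((ht0 k).trans hs.1.le) _ (hx_pos _ (hζ0 k)))
  exact ⟨hsum, hint, hle⟩

theorem stmt15
    (t ζ : ℕ → ℝ) (ht_mono : StrictMono t)
    (ht_top : Tendsto t atTop atTop)
    (hζ : ∀ k : ℕ, ζ k ∈ Icc (t k) (t (k+1)))
    (r : ℝ → ℝ) (hr_cont : ContinuousOn r (Ici (t 0)))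
    (hr_pos : ∀ s ∈ Ici (t 0), 0 < r s)
    (f : ℝ → ℝ → ℝ)
    (hf_cont : ContinuousOn (fun q : ℝ × ℝ => f q.1 q.2) ((Ici (t 0)) ×ˢ (univ : Set ℝ)))
    (hf_sign : ∀ s ∈ Ici (t 0), ∀ y : ℝ, y ≠ 0 → 0 < y * f s y)
    (x x' : ℝ → ℝ)
    (hx_deriv : ∀ s ∈ Ici (t 0), HasDerivAt x (x' s) s)
    (hx'_cont : ContinuousOn x' (Ici (t 0)))
    (hE : ∀ k : ℕ, ∀ s ∈ Ioo (t k) (t (k+1)),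
      HasDerivAt (fun u => r u * x' u) (-(f s (x (ζ k)))) s)
    (p : ℝ → ℝ) (hp_cont : ContinuousOn p (Ici (t 0)))
    (hp_nonneg : ∀ s ∈ Ici (t 0), 0 ≤ p s)
    (φ : ℝ → ℝ) (hφ_smooth : ContDiff ℝ 1 φ) (hφ_mono : Monotone φ)
    (hφ_sign : ∀ y : ℝ, y ≠ 0 → 0 < y * φ y)
    (hfp_pos : ∀ s ∈ Ici (t 0), ∀ y : ℝ, 0 < y → p s * φ y ≤ f s y)
    (hfp_neg : ∀ s ∈ Ici (t 0), ∀ y : ℝ, y < 0 → f s y ≤ p s * φ y)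
    (hp_int : ∫⁻ u in Ioi (t 0), ENNReal.ofReal (p u) < ⊤)
    (ε : ℝ) (hε : 0 < ε)
    (hφ_int : ∫⁻ u in Ioi ε, ENNReal.ofReal (1 / φ u) < ⊤)
    (hx_pos : ∀ s ∈ Ici (t 0), 0 < x s)
    (hx'_nonneg : ∀ s ∈ Ici (t 0), 0 ≤ x' s) :
    Summable (fun j : ℕ => ∫ s in t j..ζ j, (1 / r s) * ∫ u in Ioi (t (j+1)), p u) ∧
    IntegrableOn (fun z => 1 / φ z) (Ioi (x (t 0))) ∧
    ∑' j : ℕ, (∫ s in t j..ζ j, (1 / r s) * ∫ u in Ioi (t (j+1)), p u) ≤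
      ∫ z in Ioi (x (t 0)), 1 / φ z :=
  stmt15_general t ζ ht_mono ht_top hζ r hr_cont hr_pos f x x' hx_deriv hx'_cont hE p hp_cont
    hp_nonneg φ hφ_mono hφ_sign hfp_pos hp_int ε hφ_int hx_pos hx'_nonneg
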